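/- Time derivative of a spatial joint screw equals the bracket with the spatial twist: if J^s_j(t) = Ad_{C(t)} Y_j with C(t) = exp(Ŷ₁q₁(t))···exp(Ŷ_{j-1}q_{j-1}(t)), then d/dt J^s_j = [V^s_{j-1}, J^s_j], where V^s_{j-1} = Σ_{k<j} J^s_k q̇_k is the spatial twist, equal to the vector form of Ċ C⁻¹. -/

import Mathlib

open Matrix

noncomputable section

/-- The 3×3 skew-symmetric matrix `ṽ` of a vector `v ∈ ℝ³`, satisfying `ṽ y = v × y`. -/
def skew (v : Fin 3 → ℝ) : Matrix (Fin 3) (Fin 3) ℝ :=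
  !![0, -v 2, v 1; v 2, 0, -v 0; -v 1, v 0, 0]

/-- The 4×4 matrix `X̂ = [[ξ̃, η],[0,0]]` of a screw `X = (ξ, η) ∈ ℝ⁶`. -/
def hat (ξ η : Fin 3 → ℝ) : Matrix (Fin 3 ⊕ Fin 1) (Fin 3 ⊕ Fin 1) ℝ :=
  Matrix.fromBlocks (skew ξ) (Matrix.of fun i _ => η i) 0 0

/-- The 6×6 adjoint matrix `Ad_C = [[R,0],[r̃R,R]]` of `C = (R, r) ∈ SE(3)`. -/
def AdM (R : Matrix (Fin 3) (Fin 3) ℝ) (r : Fin 3 → ℝ) :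
    Matrix (Fin 3 ⊕ Fin 3) (Fin 3 ⊕ Fin 3) ℝ :=
  Matrix.fromBlocks R 0 (skew r * R) R

/-- The 6×6 matrix `ad_X = [[ξ̃,0],[η̃,ξ̃]]` of a screw `X = (ξ, η)`. -/
def adM (ξ η : Fin 3 → ℝ) : Matrix (Fin 3 ⊕ Fin 3) (Fin 3 ⊕ Fin 3) ℝ :=
  Matrix.fromBlocks (skew ξ) 0 (skew η) (skew ξ)

/-- The screw product (Lie bracket) in vector notation on `ℝ⁶ = ℝ³ × ℝ³`. -/
def br (X Y : (Fin 3 → ℝ) × (Fin 3 → ℝ)) : (Fin 3 → ℝ) × (Fin 3 → ℝ) :=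
  (X.1 ⨯₃ Y.1, X.2 ⨯₃ Y.1 + X.1 ⨯₃ Y.2)

/-- The action of `Ad_C` on a screw `(ξ, η) ∈ ℝ⁶` for `C = (R, r)`. -/
def AdAct (R : Matrix (Fin 3) (Fin 3) ℝ) (r : Fin 3 → ℝ)
    (X : (Fin 3 → ℝ) × (Fin 3 → ℝ)) : (Fin 3 → ℝ) × (Fin 3 → ℝ) :=
  (R *ᵥ X.1, skew r *ᵥ (R *ᵥ X.1) + R *ᵥ X.2)

/-- A 4×4 matrix is an element of `se(3)`. -/
def IsSE3 (M : Matrix (Fin 3 ⊕ Fin 1) (Fin 3 ⊕ Fin 1) ℝ) : Prop :=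
  ∃ (W : Matrix (Fin 3) (Fin 3) ℝ) (v : Fin 3 → ℝ),
    Wᵀ = -W ∧ M = Matrix.fromBlocks W (Matrix.of fun i _ => v i) 0 0

/-- A 4×4 matrix is an element of `SE(3)`, i.e. of the form `[[R, r],[0,1]]` with
`R ∈ SO(3)`. -/
def IsSE3Grp (M : Matrix (Fin 3 ⊕ Fin 1) (Fin 3 ⊕ Fin 1) ℝ) : Prop :=
  ∃ (R : Matrix (Fin 3) (Fin 3) ℝ) (r : Fin 3 → ℝ),
    Rᵀ * R = 1 ∧ R.det = 1 ∧ M = Matrix.fromBlocks R (Matrix.of fun i _ => r i) 0 1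

/-- The partial product of exponentials `exp(Ŷ₁q₁)⋯exp(Ŷ_mq_m)` (joints `1,…,m`). -/
def poe (Y : ℕ → Matrix (Fin 3 ⊕ Fin 1) (Fin 3 ⊕ Fin 1) ℝ) (q : ℕ → ℝ) (m : ℕ) :
    Matrix (Fin 3 ⊕ Fin 1) (Fin 3 ⊕ Fin 1) ℝ :=
  (((List.range m).map fun j => NormedSpace.exp (q (j + 1) • Y (j + 1))).prod)

/-- The configuration `C_i(q) = exp(Ŷ₁q₁)⋯exp(Ŷᵢqᵢ) Aᵢ` of body `i`. -/
def conf (Y A : ℕ → Matrix (Fin 3 ⊕ Fin 1) (Fin 3 ⊕ Fin 1) ℝ) (q : ℕ → ℝ) (i : ℕ) :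
    Matrix (Fin 3 ⊕ Fin 1) (Fin 3 ⊕ Fin 1) ℝ :=
  poe Y q i * A i

/-- The matrix `Ĵ^b_{i,j} = C_i⁻¹ C_j A_j⁻¹ Ŷ_j A_j C_j⁻¹ C_i` of the body-fixed
instantaneous screw of joint `j` for body `i`. -/
def Jb (Y A : ℕ → Matrix (Fin 3 ⊕ Fin 1) (Fin 3 ⊕ Fin 1) ℝ) (q : ℕ → ℝ) (i j : ℕ) :
    Matrix (Fin 3 ⊕ Fin 1) (Fin 3 ⊕ Fin 1) ℝ :=
  (conf Y A q i)⁻¹ * conf Y A q j * (A j)⁻¹ * Y j * A j * (conf Y A q j)⁻¹ * conf Y A q i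

/-- The matrix of the spatial instantaneous screw of joint `j`. -/
def Js (Y : ℕ → Matrix (Fin 3 ⊕ Fin 1) (Fin 3 ⊕ Fin 1) ℝ) (q : ℕ → ℝ) (j : ℕ) :
    Matrix (Fin 3 ⊕ Fin 1) (Fin 3 ⊕ Fin 1) ℝ :=
  poe Y q (j - 1) * Y j * (poe Y q (j - 1))⁻¹

/-!
Write `P_m(t) = exp(Ŷ₁q₁(t))⋯exp(Ŷ_m q_m(t))`, so that `J^s_j = P_{j-1} Ŷ_j P_{j-1}⁻¹`. Appending the
factor `exp(Ŷ_{m+1} q_{m+1})` adds `q̇_{m+1} P_m Ŷ_{m+1} P_m⁻¹ = q̇_{m+1} J^s_{m+1}` to the right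
logarithmic derivative `Ṗ P⁻¹`, so by induction `Ṗ_m = V^s_m P_m`. Differentiating the conjugate
`P Ŷ_j P⁻¹` of a constant then gives `V P Ŷ_j P⁻¹ - P Ŷ_j P⁻¹ V = [V^s_{j-1}, J^s_j]`.
-/

section NormedAlgebra

variable {A : Type*} [NormedRing A] [NormedAlgebra ℝ A] {P : ℝ → A} {P' V : A} {t : ℝ}

theorem HasDerivAt.ringInverse [HasSummableGeomSeries A] (hP : HasDerivAt P P' t)
    (hu : IsUnit (P t)) :
    HasDerivAt (fun s => Ring.inverse (P s))
      (-(Ring.inverse (P t) * P' * Ring.inverse (P t))) t := by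
  obtain ⟨u, hu⟩ := hu
  have h := hasFDerivAt_ringInverse (𝕜 := ℝ) u
  rw [hu] at h
  refine (h.comp_hasDerivAt t hP).congr_deriv ?_
  simp [← hu]

theorem HasDerivAt.conj_ringInverse [HasSummableGeomSeries A] (hP : HasDerivAt P (V * P t) t)
    (hu : IsUnit (P t)) (Y : A) :
    HasDerivAt (fun s => P s * Y * Ring.inverse (P s))
      (V * (P t * Y * Ring.inverse (P t)) - P t * Y * Ring.inverse (P t) * V) t := by
  refine ((hP.mul_const Y).mul (hP.ringInverse hu)).congr_deriv ?_
  rw [← mul_assoc (Ring.inverse (P t)) V, Ring.mul_inverse_cancel_right _ _ hu]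
  noncomm_ring

theorem HasDerivAt.mul_exp_smul [CompleteSpace A] (hP : HasDerivAt P (V * P t) t)
    (hu : IsUnit (P t)) {q : ℝ → ℝ} {q' : ℝ} (hq : HasDerivAt q q' t) (X : A) :
    HasDerivAt (fun s => P s * NormedSpace.exp (q s • X))
      ((V + q' • (P t * X * Ring.inverse (P t))) * (P t * NormedSpace.exp (q t • X))) t := by
  refine (hP.mul ((hasDerivAt_exp_smul_const' X (q t)).scomp t hq)).congr_deriv ?_
  rw [add_mul, smul_mul_assoc, ← mul_assoc (P t * X * Ring.inverse (P t)),
    Ring.inverse_mul_cancel_right _ _ hu]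
  simp only [Function.comp_apply, mul_assoc, mul_smul_comm]

end NormedAlgebra

section Matrix

-- Any complete algebra norm would do: the theorem is read off entrywise.
open scoped Matrix.Norms.Operator

local notation "Mat" => Matrix (Fin 3 ⊕ Fin 1) (Fin 3 ⊕ Fin 1) ℝ

def spatialTwist (Y : ℕ → Mat) (q q' : ℕ → ℝ) (m : ℕ) : Mat :=
  ∑ k ∈ Finset.Icc 1 m, q' k • Js Y q k

variable (Y : ℕ → Mat)

theorem spatialTwist_succ (q q' : ℕ → ℝ) (m : ℕ) :
    spatialTwist Y q q' (m + 1) = spatialTwist Y q q' m + q' (m + 1) • Js Y q (m + 1) :=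
  Finset.sum_Icc_succ_top (Nat.le_add_left 1 m) _

theorem poe_succ (q : ℕ → ℝ) (m : ℕ) :
    poe Y q (m + 1) = poe Y q m * NormedSpace.exp (q (m + 1) • Y (m + 1)) := by
  simp [poe, List.range_succ]

theorem isUnit_poe (q : ℕ → ℝ) (m : ℕ) : IsUnit (poe Y q m) :=
  List.prod_isUnit <| by simp [Matrix.isUnit_exp]

theorem Js_eq_poe_mul_mul_ringInverse (q : ℕ → ℝ) (j : ℕ) :
    Js Y q j = poe Y q (j - 1) * Y j * Ring.inverse (poe Y q (j - 1)) := by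
  rw [Js, Matrix.nonsing_inv_eq_ringInverse]

theorem hasDerivAt_poe {q : ℕ → ℝ → ℝ} {q' : ℕ → ℝ} {t₀ : ℝ}
    (hq : ∀ k, HasDerivAt (q k) (q' k) t₀) (m : ℕ) :
    HasDerivAt (fun t => poe Y (fun l => q l t) m)
      (spatialTwist Y (fun l => q l t₀) q' m * poe Y (fun l => q l t₀) m) t₀ := by
  induction m with
  | zero =>
    simp only [spatialTwist, poe, Finset.Icc_eq_empty_of_lt, zero_lt_one, Finset.sum_empty,
      zero_mul, List.range_zero, List.map_nil, List.prod_nil]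
    exact hasDerivAt_const t₀ 1
  | succ m ih =>
    simp only [poe_succ, spatialTwist_succ, Js_eq_poe_mul_mul_ringInverse, Nat.add_sub_cancel]
    exact ih.mul_exp_smul (isUnit_poe Y _ m) (hq (m + 1)) (Y (m + 1))

end Matrix

theorem timeDeriv_spatialJacobian_general (Y : ℕ → Matrix (Fin 3 ⊕ Fin 1) (Fin 3 ⊕ Fin 1) ℝ)
    (q : ℕ → ℝ → ℝ) (q' : ℕ → ℝ) (t₀ : ℝ)
    (hq : ∀ k, HasDerivAt (q k) (q' k) t₀) (j : ℕ) :
    ∀ a b, HasDerivAt (fun t => Js Y (fun l => q l t) j a b)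
      (((∑ k ∈ Finset.Icc 1 (j - 1), q' k • Js Y (fun l => q l t₀) k) *
          Js Y (fun l => q l t₀) j -
        Js Y (fun l => q l t₀) j *
          ∑ k ∈ Finset.Icc 1 (j - 1), q' k • Js Y (fun l => q l t₀) k) a b) t₀ := by
  open scoped Matrix.Norms.Operator in
  intro a b
  have hJs : HasDerivAt (fun t => Js Y (fun l => q l t) j)
      (spatialTwist Y (fun l => q l t₀) q' (j - 1) * Js Y (fun l => q l t₀) j -
        Js Y (fun l => q l t₀) j * spatialTwist Y (fun l => q l t₀) q' (j - 1)) t₀ := by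
    simp only [Js_eq_poe_mul_mul_ringInverse]
    exact (hasDerivAt_poe Y hq (j - 1)).conj_ringInverse (isUnit_poe Y _ _) (Y j)
  exact (Matrix.entryLinearMap ℝ ℝ a b).toContinuousLinearMap.hasFDerivAt.comp_hasDerivAt t₀ hJs

/-- `d/dt J^s_j = [V^s_{j−1}, J^s_j]` with `V^s_{j−1} = Σ_{k<j} J^s_k q̇_k` (entrywise). -/
theorem timeDeriv_spatialJacobian (Y : ℕ → Matrix (Fin 3 ⊕ Fin 1) (Fin 3 ⊕ Fin 1) ℝ)
    (hY : ∀ j, IsSE3 (Y j)) (q : ℕ → ℝ → ℝ) (q' : ℕ → ℝ) (t₀ : ℝ)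
    (hq : ∀ k, HasDerivAt (q k) (q' k) t₀) (j : ℕ) (hj : 1 ≤ j) :
    ∀ a b, HasDerivAt (fun t => Js Y (fun l => q l t) j a b)
      (((∑ k ∈ Finset.Icc 1 (j - 1), q' k • Js Y (fun l => q l t₀) k) *
          Js Y (fun l => q l t₀) j -
        Js Y (fun l => q l t₀) j *
          ∑ k ∈ Finset.Icc 1 (j - 1), q' k • Js Y (fun l => q l t₀) k) a b) t₀ :=
  timeDeriv_spatialJacobian_general Y q q' t₀ hq j
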